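/- arXiv:2310.09545 — 2 statements merged into one kernel-verified Lean document; each statement's English description precedes it below -/
import Mathlib

section
/- Let O = (X, A, Y, T, Z) with A, T, Z binary. Define μ_C(t,z,x) = E[C | T=t, Z=z, X=x] for C ∈ {A, Y} and δ_C(x) = μ_C(1,1,x) − μ_C(0,1,x) − μ_C(1,0,x) + μ_C(0,0,x). Under the instrumented DiD assumptions (consistency, positivity, random sampling, stable treatment effect over time, independence & exclusion restriction, and no unmeasured common effect modifier), δ_Y(X) = δ_A(X) · τ(X), where τ(x) = E[Y_t(1) − Y_t(0) | X = x] is the conditional average treatment effect (common across t = 0,1). -/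
/-!
Within an instrument arm `Z = z`, random sampling makes the period-`t` cell an unbiased sample of
the arm, so by consistency `E[Y | T = t, Z = z] = E[Y_t(0) + A_t(z) (Y_t(1) - Y_t(0)) | Z = z]`.
Differencing over time and then, by independence and exclusion, replacing the arm by the whole
population, `δ_Y` becomes `Σ_t ± E[(A_t(1) - A_t(0)) (Y_t(1) - Y_t(0))]`: the untreated trend
`Y_1(0) - Y_0(0)` cancels between the arms. With no common effect modifier each of these
expectations factors as `E[A_t(1) - A_t(0)] τ`, and `E[A_t(z)] = E[A | T = t, Z = z]` identifies
the first factors, which sum to `δ_A`.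
-/

open MeasureTheory ProbabilityTheory

noncomputable def bi (b : Bool) : ℝ := if b then 1 else 0

theorem MeasureTheory.Integrable.cond {Ω E : Type*} [MeasurableSpace Ω] [NormedAddCommGroup E]
    {μ : Measure Ω} {f : Ω → E} (hf : Integrable f μ) (s : Set Ω) : Integrable f μ[|s] := by
  by_cases hs : μ s = 0
  · simp [cond_eq_zero_of_meas_eq_zero hs]
  · exact hf.restrict.smul_measure (ENNReal.inv_ne_top.2 hs)

section Bi

lemma measurable_bi : Measurable bi := measurable_of_finite bi

lemma norm_bi_le_one (b : Bool) : ‖bi b‖ ≤ 1 := by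
  cases b <;> simp [bi]

lemma eq_add_bi_mul_sub (f : Bool → ℝ) (b : Bool) : f b = f false + bi b * (f true - f false) := by
  cases b <;> simp [bi]

variable {Ω : Type*} [MeasurableSpace Ω] {μ : Measure Ω} {f : Ω → Bool}

lemma integrable_bi_comp [IsFiniteMeasure μ] (hf : Measurable f) :
    Integrable (fun ω => bi (f ω)) μ :=
  .of_bound (measurable_bi.comp hf).aestronglyMeasurable 1 (ae_of_all _ fun _ => norm_bi_le_one _)

lemma MeasureTheory.Integrable.bi_comp_mul {g : Ω → ℝ} (hg : Integrable g μ) (hf : Measurable f) :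
    Integrable (fun ω => bi (f ω) * g ω) μ :=
  hg.bdd_mul (measurable_bi.comp hf).aestronglyMeasurable (ae_of_all _ fun _ => norm_bi_le_one _)

end Bi

section InstrumentedDiD

variable {Ω : Type*} [MeasurableSpace Ω] {μ : Measure Ω} {T Z A : Ω → Bool} {Y : Ω → ℝ}
  {Apot : Bool → Bool → Ω → Bool} {Ypot : Bool → Bool → Ω → ℝ}

def RandomSampling (μ : Measure Ω) (T Z : Ω → Bool) (Apot : Bool → Bool → Ω → Bool)
    (Ypot : Bool → Bool → Ω → ℝ) : Prop :=
  ∀ (g : (Bool → Bool → Bool) → (Bool → Bool → ℝ) → ℝ) (t z : Bool),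
    Integrable (fun ω => g (fun t' z' => Apot t' z' ω) (fun t' a => Ypot t' a ω)) μ →
    ∫ ω, g (fun t' z' => Apot t' z' ω) (fun t' a => Ypot t' a ω)
        ∂(μ[|{ω | T ω = t ∧ Z ω = z}])
      = ∫ ω, g (fun t' z' => Apot t' z' ω) (fun t' a => Ypot t' a ω) ∂(μ[|{ω | Z ω = z}])

def IndependenceExclusion (μ : Measure Ω) (Z : Ω → Bool) (Apot : Bool → Bool → Ω → Bool)
    (Ypot : Bool → Bool → Ω → ℝ) : Prop :=
  ∀ (g : (Bool → Bool → Bool) → (Bool → ℝ) → ℝ → ℝ) (z : Bool),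
    Integrable (fun ω => g (fun t' z' => Apot t' z' ω)
        (fun t' => Ypot t' true ω - Ypot t' false ω)
        (Ypot true false ω - Ypot false false ω)) μ →
    ∫ ω, g (fun t' z' => Apot t' z' ω) (fun t' => Ypot t' true ω - Ypot t' false ω)
        (Ypot true false ω - Ypot false false ω) ∂(μ[|{ω | Z ω = z}])
      = ∫ ω, g (fun t' z' => Apot t' z' ω) (fun t' => Ypot t' true ω - Ypot t' false ω)
        (Ypot true false ω - Ypot false false ω) ∂μ

lemma measurableSet_cell (hmT : Measurable T) (hmZ : Measurable Z) (t z : Bool) :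
    MeasurableSet {ω | T ω = t ∧ Z ω = z} :=
  (hmT (measurableSet_singleton t)).inter (hmZ (measurableSet_singleton z))

lemma integral_cond_treatment_eq [IsFiniteMeasure μ] (hmT : Measurable T) (hmZ : Measurable Z)
    (hmApot : ∀ t z, Measurable (Apot t z)) (hconsA : ∀ ω, A ω = Apot (T ω) (Z ω) ω)
    (hrs : RandomSampling μ T Z Apot Ypot) (hie : IndependenceExclusion μ Z Apot Ypot)
    (t z : Bool) :
    ∫ ω, bi (A ω) ∂(μ[|{ω | T ω = t ∧ Z ω = z}]) = ∫ ω, bi (Apot t z ω) ∂μ :=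
  calc ∫ ω, bi (A ω) ∂(μ[|{ω | T ω = t ∧ Z ω = z}])
      = ∫ ω, bi (Apot t z ω) ∂(μ[|{ω | T ω = t ∧ Z ω = z}]) :=
        integral_congr_ae <| ae_cond_of_forall_mem (measurableSet_cell hmT hmZ t z)
          fun ω ⟨hT, hZ⟩ => by simp only [hconsA, hT, hZ]
    _ = ∫ ω, bi (Apot t z ω) ∂(μ[|{ω | Z ω = z}]) :=
        hrs (fun Af _ => bi (Af t z)) t z (integrable_bi_comp (hmApot t z))
    _ = ∫ ω, bi (Apot t z ω) ∂μ :=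
        hie (fun Af _ _ => bi (Af t z)) z (integrable_bi_comp (hmApot t z))

lemma integral_cond_outcome_eq (hmT : Measurable T) (hmZ : Measurable Z)
    (hmApot : ∀ t z, Measurable (Apot t z)) (hiYpot : ∀ t a, Integrable (Ypot t a) μ)
    (hconsA : ∀ ω, A ω = Apot (T ω) (Z ω) ω) (hconsY : ∀ ω, Y ω = Ypot (T ω) (A ω) ω)
    (hrs : RandomSampling μ T Z Apot Ypot) (t z : Bool) :
    ∫ ω, Y ω ∂(μ[|{ω | T ω = t ∧ Z ω = z}])
      = ∫ ω, (Ypot t false ω + bi (Apot t z ω) * (Ypot t true ω - Ypot t false ω))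
          ∂(μ[|{ω | Z ω = z}]) :=
  calc ∫ ω, Y ω ∂(μ[|{ω | T ω = t ∧ Z ω = z}])
      = ∫ ω, (Ypot t false ω + bi (Apot t z ω) * (Ypot t true ω - Ypot t false ω))
          ∂(μ[|{ω | T ω = t ∧ Z ω = z}]) :=
        integral_congr_ae <| ae_cond_of_forall_mem (measurableSet_cell hmT hmZ t z)
          fun ω ⟨hT, hZ⟩ => by rw [hconsY, hconsA, hT, hZ, eq_add_bi_mul_sub (Ypot t · ω)]
    _ = _ :=
        hrs (fun Af Yf => Yf t false + bi (Af t z) * (Yf t true - Yf t false)) t z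
          ((hiYpot t false).add (((hiYpot t true).sub (hiYpot t false)).bi_comp_mul (hmApot t z)))

lemma integral_cond_outcome_sub_eq (hmT : Measurable T) (hmZ : Measurable Z)
    (hmApot : ∀ t z, Measurable (Apot t z)) (hiYpot : ∀ t a, Integrable (Ypot t a) μ)
    (hconsA : ∀ ω, A ω = Apot (T ω) (Z ω) ω) (hconsY : ∀ ω, Y ω = Ypot (T ω) (A ω) ω)
    (hrs : RandomSampling μ T Z Apot Ypot) (hie : IndependenceExclusion μ Z Apot Ypot)
    (z : Bool) :
    ∫ ω, Y ω ∂(μ[|{ω | T ω = true ∧ Z ω = z}]) - ∫ ω, Y ω ∂(μ[|{ω | T ω = false ∧ Z ω = z}])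
      = ∫ ω, (Ypot true false ω - Ypot false false ω) ∂μ
        + ∫ ω, bi (Apot true z ω) * (Ypot true true ω - Ypot true false ω) ∂μ
        - ∫ ω, bi (Apot false z ω) * (Ypot false true ω - Ypot false false ω) ∂μ := by
  have hiD : ∀ t, Integrable (fun ω => Ypot t true ω - Ypot t false ω) μ :=
    fun t => (hiYpot t true).sub (hiYpot t false)
  have hiW : Integrable (fun ω => Ypot true false ω - Ypot false false ω) μ :=
    (hiYpot true false).sub (hiYpot false false)
  have hi1 := (hiD true).bi_comp_mul (hmApot true z)
  have hi0 := (hiD false).bi_comp_mul (hmApot false z)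
  have hiF : ∀ t, Integrable
      (fun ω => Ypot t false ω + bi (Apot t z ω) * (Ypot t true ω - Ypot t false ω)) μ :=
    fun t => (hiYpot t false).add ((hiD t).bi_comp_mul (hmApot t z))
  calc ∫ ω, Y ω ∂(μ[|{ω | T ω = true ∧ Z ω = z}]) - ∫ ω, Y ω ∂(μ[|{ω | T ω = false ∧ Z ω = z}])
      = ∫ ω, (Ypot true false ω + bi (Apot true z ω) * (Ypot true true ω - Ypot true false ω)
          - (Ypot false false ω + bi (Apot false z ω) * (Ypot false true ω - Ypot false false ω)))
          ∂(μ[|{ω | Z ω = z}]) := by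
        rw [integral_sub ((hiF true).cond _) ((hiF false).cond _),
          integral_cond_outcome_eq hmT hmZ hmApot hiYpot hconsA hconsY hrs,
          integral_cond_outcome_eq hmT hmZ hmApot hiYpot hconsA hconsY hrs]
    _ = ∫ ω, (Ypot true false ω - Ypot false false ω
          + bi (Apot true z ω) * (Ypot true true ω - Ypot true false ω)
          - bi (Apot false z ω) * (Ypot false true ω - Ypot false false ω))
          ∂(μ[|{ω | Z ω = z}]) := by
        congr 1 with ω
        ring
    _ = ∫ ω, (Ypot true false ω - Ypot false false ω
          + bi (Apot true z ω) * (Ypot true true ω - Ypot true false ω)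
          - bi (Apot false z ω) * (Ypot false true ω - Ypot false false ω)) ∂μ :=
        hie (fun Af Df W => W + bi (Af true z) * Df true - bi (Af false z) * Df false) z
          ((hiW.add hi1).sub hi0)
    _ = _ := by
        rw [integral_sub, integral_add hiW hi1]
        exacts [hiW.add hi1, hi0]

lemma integral_bi_mul_effect_sub_eq [IsFiniteMeasure μ] (hmApot : ∀ t z, Measurable (Apot t z))
    (hiYpot : ∀ t a, Integrable (Ypot t a) μ) {τ : ℝ} (t : Bool)
    (hstab : ∫ ω, (Ypot t true ω - Ypot t false ω) ∂μ = τ)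
    (hnocm : ∫ ω, (bi (Apot t true ω) - bi (Apot t false ω)) *
                        (Ypot t true ω - Ypot t false ω) ∂μ
        = (∫ ω, (bi (Apot t true ω) - bi (Apot t false ω)) ∂μ) *
          (∫ ω, (Ypot t true ω - Ypot t false ω) ∂μ)) :
    ∫ ω, bi (Apot t true ω) * (Ypot t true ω - Ypot t false ω) ∂μ
      - ∫ ω, bi (Apot t false ω) * (Ypot t true ω - Ypot t false ω) ∂μ
      = (∫ ω, bi (Apot t true ω) ∂μ - ∫ ω, bi (Apot t false ω) ∂μ) * τ := by
  have hiD : Integrable (fun ω => Ypot t true ω - Ypot t false ω) μ :=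
    (hiYpot t true).sub (hiYpot t false)
  rw [← integral_sub (hiD.bi_comp_mul (hmApot t true)) (hiD.bi_comp_mul (hmApot t false))]
  simp_rw [← sub_mul]
  rw [hnocm, hstab,
    integral_sub (integrable_bi_comp (hmApot t true)) (integrable_bi_comp (hmApot t false))]

end InstrumentedDiD

/-- `μ` is the conditional law of the data given `X = x` for a fixed covariate value `x`, so
conditioning on `X` is implicit: `E[· | X]` is `∫ · ∂μ` and `E[· | X, T = t, Z = z]` is
`∫ · ∂μ[|{T = t, Z = z}]`. -/
theorem stmt0_general {Ω : Type*} [MeasurableSpace Ω] (μ : Measure Ω) [IsProbabilityMeasure μ]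
    (T Z A : Ω → Bool) (Y : Ω → ℝ)
    (Apot : Bool → Bool → Ω → Bool)   -- Apot t z ω = A_t(z)(ω)
    (Ypot : Bool → Bool → Ω → ℝ)      -- Ypot t a ω = Y_t(a)(ω)
    (τ : ℝ)
    (hmT : Measurable T) (hmZ : Measurable Z)
    (hmApot : ∀ t z, Measurable (Apot t z))
    (hiYpot : ∀ t a, Integrable (Ypot t a) μ)
    -- consistency: A = A_T(Z) and Y = Y_T(A)
    (hconsA : ∀ ω, A ω = Apot (T ω) (Z ω) ω)
    (hconsY : ∀ ω, Y ω = Ypot (T ω) (A ω) ω)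
    -- random sampling: T ⫫ {A_t(z), Y_t(a)} | X, Z
    (hrs : ∀ (g : (Bool → Bool → Bool) → (Bool → Bool → ℝ) → ℝ) (t z : Bool),
      Integrable (fun ω => g (fun t' z' => Apot t' z' ω) (fun t' a => Ypot t' a ω)) μ →
      ∫ ω, g (fun t' z' => Apot t' z' ω) (fun t' a => Ypot t' a ω)
          ∂(μ[|{ω | T ω = t ∧ Z ω = z}])
        = ∫ ω, g (fun t' z' => Apot t' z' ω) (fun t' a => Ypot t' a ω) ∂(μ[|{ω | Z ω = z}]))
    -- stable treatment effect over time: E[Y_t(1) − Y_t(0) | X=x] = τ(x) for t = 0, 1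
    (hstab : ∀ t, ∫ ω, (Ypot t true ω - Ypot t false ω) ∂μ = τ)
    -- independence & exclusion restriction:
    -- Z ⫫ {A_t(1), A_t(0), Y_t(1)−Y_t(0), Y_1(0)−Y_0(0) : t = 0,1} | X
    (hie : ∀ (g : (Bool → Bool → Bool) → (Bool → ℝ) → ℝ → ℝ) (z : Bool),
      Integrable (fun ω => g (fun t' z' => Apot t' z' ω)
          (fun t' => Ypot t' true ω - Ypot t' false ω)
          (Ypot true false ω - Ypot false false ω)) μ →
      ∫ ω, g (fun t' z' => Apot t' z' ω) (fun t' => Ypot t' true ω - Ypot t' false ω)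
          (Ypot true false ω - Ypot false false ω) ∂(μ[|{ω | Z ω = z}])
        = ∫ ω, g (fun t' z' => Apot t' z' ω) (fun t' => Ypot t' true ω - Ypot t' false ω)
          (Ypot true false ω - Ypot false false ω) ∂μ)
    -- no unmeasured common effect modifier: Cov(A_t(1)−A_t(0), Y_t(1)−Y_t(0) | X) = 0
    (hnocm : ∀ t, ∫ ω, (bi (Apot t true ω) - bi (Apot t false ω)) *
                        (Ypot t true ω - Ypot t false ω) ∂μ
        = (∫ ω, (bi (Apot t true ω) - bi (Apot t false ω)) ∂μ) *
          (∫ ω, (Ypot t true ω - Ypot t false ω) ∂μ)) :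
    -- conclusion: δ_Y(X) = δ_A(X) · τ(X)
    (∫ ω, Y ω ∂(μ[|{ω | T ω = true ∧ Z ω = true}]))
      - (∫ ω, Y ω ∂(μ[|{ω | T ω = false ∧ Z ω = true}]))
      - (∫ ω, Y ω ∂(μ[|{ω | T ω = true ∧ Z ω = false}]))
      + (∫ ω, Y ω ∂(μ[|{ω | T ω = false ∧ Z ω = false}]))
    = ((∫ ω, bi (A ω) ∂(μ[|{ω | T ω = true ∧ Z ω = true}]))
        - (∫ ω, bi (A ω) ∂(μ[|{ω | T ω = false ∧ Z ω = true}]))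
        - (∫ ω, bi (A ω) ∂(μ[|{ω | T ω = true ∧ Z ω = false}]))
        + (∫ ω, bi (A ω) ∂(μ[|{ω | T ω = false ∧ Z ω = false}]))) * τ := by
  have hY := integral_cond_outcome_sub_eq hmT hmZ hmApot hiYpot hconsA hconsY hrs hie
  have hA := integral_cond_treatment_eq hmT hmZ hmApot hconsA hrs hie
  have hEff t := integral_bi_mul_effect_sub_eq hmApot hiYpot t (hstab t) (hnocm t)
  simp only [hA]
  linear_combination hY true - hY false + hEff true - hEff false

/-- instrumented DiD identification of the CATE, conditionally on `X = x`.
All statements are relative to `μ`, the conditional law of the data given `X = x` for a fixed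
covariate value `x` (so "conditional on `X`" quantities are plain expectations under `μ`, and
"conditional on `X, T=t, Z=z`" quantities are expectations under `μ[|{T=t, Z=z}]`).
`Apot t z = A_t(z)` is the potential treatment, `Ypot t a = Y_t(a)` the potential outcome,
and `τ = τ(x)` the (time-invariant) conditional average treatment effect.
Under consistency, positivity, random sampling, stable treatment effect over time,
independence & exclusion restriction, and no unmeasured common effect modifier:
`δ_Y(x) = δ_A(x) · τ(x)`, where `δ_C(x) = μ_C(1,1,x) − μ_C(0,1,x) − μ_C(1,0,x) + μ_C(0,0,x)`
with `μ_C(t,z,x) = E[C | T=t, Z=z, X=x]`. -/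
theorem stmt0 {Ω : Type*} [MeasurableSpace Ω] (μ : Measure Ω) [IsProbabilityMeasure μ]
    (T Z A : Ω → Bool) (Y : Ω → ℝ)
    (Apot : Bool → Bool → Ω → Bool)   -- Apot t z ω = A_t(z)(ω)
    (Ypot : Bool → Bool → Ω → ℝ)      -- Ypot t a ω = Y_t(a)(ω)
    (τ : ℝ)
    (hmT : Measurable T) (hmZ : Measurable Z) (hmA : Measurable A)
    (hmApot : ∀ t z, Measurable (Apot t z))
    (hiY : Integrable Y μ) (hiYpot : ∀ t a, Integrable (Ypot t a) μ)
    -- consistency: A = A_T(Z) and Y = Y_T(A)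
    (hconsA : ∀ ω, A ω = Apot (T ω) (Z ω) ω)
    (hconsY : ∀ ω, Y ω = Ypot (T ω) (A ω) ω)
    -- positivity: c₁ < Pr(T=t, Z=z | X=x) < 1 − c₁
    (c₁ : ℝ) (hc₁ : 0 < c₁) (hc₁' : c₁ < 1/2)
    (hpos : ∀ t z, c₁ < (μ {ω | T ω = t ∧ Z ω = z}).toReal ∧
                   (μ {ω | T ω = t ∧ Z ω = z}).toReal < 1 - c₁)
    -- random sampling: T ⫫ {A_t(z), Y_t(a)} | X, Z
    (hrs : ∀ (g : (Bool → Bool → Bool) → (Bool → Bool → ℝ) → ℝ) (t z : Bool),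
      Integrable (fun ω => g (fun t' z' => Apot t' z' ω) (fun t' a => Ypot t' a ω)) μ →
      ∫ ω, g (fun t' z' => Apot t' z' ω) (fun t' a => Ypot t' a ω)
          ∂(μ[|{ω | T ω = t ∧ Z ω = z}])
        = ∫ ω, g (fun t' z' => Apot t' z' ω) (fun t' a => Ypot t' a ω) ∂(μ[|{ω | Z ω = z}]))
    -- stable treatment effect over time: E[Y_t(1) − Y_t(0) | X=x] = τ(x) for t = 0, 1
    (hstab : ∀ t, ∫ ω, (Ypot t true ω - Ypot t false ω) ∂μ = τ)
    -- independence & exclusion restriction: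
    -- Z ⫫ {A_t(1), A_t(0), Y_t(1)−Y_t(0), Y_1(0)−Y_0(0) : t = 0,1} | X
    (hie : ∀ (g : (Bool → Bool → Bool) → (Bool → ℝ) → ℝ → ℝ) (z : Bool),
      Integrable (fun ω => g (fun t' z' => Apot t' z' ω)
          (fun t' => Ypot t' true ω - Ypot t' false ω)
          (Ypot true false ω - Ypot false false ω)) μ →
      ∫ ω, g (fun t' z' => Apot t' z' ω) (fun t' => Ypot t' true ω - Ypot t' false ω)
          (Ypot true false ω - Ypot false false ω) ∂(μ[|{ω | Z ω = z}])
        = ∫ ω, g (fun t' z' => Apot t' z' ω) (fun t' => Ypot t' true ω - Ypot t' false ω)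
          (Ypot true false ω - Ypot false false ω) ∂μ)
    -- no unmeasured common effect modifier: Cov(A_t(1)−A_t(0), Y_t(1)−Y_t(0) | X) = 0
    (hnocm : ∀ t, ∫ ω, (bi (Apot t true ω) - bi (Apot t false ω)) *
                        (Ypot t true ω - Ypot t false ω) ∂μ
        = (∫ ω, (bi (Apot t true ω) - bi (Apot t false ω)) ∂μ) *
          (∫ ω, (Ypot t true ω - Ypot t false ω) ∂μ)) :
    -- conclusion: δ_Y(X) = δ_A(X) · τ(X)
    (∫ ω, Y ω ∂(μ[|{ω | T ω = true ∧ Z ω = true}]))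
      - (∫ ω, Y ω ∂(μ[|{ω | T ω = false ∧ Z ω = true}]))
      - (∫ ω, Y ω ∂(μ[|{ω | T ω = true ∧ Z ω = false}]))
      + (∫ ω, Y ω ∂(μ[|{ω | T ω = false ∧ Z ω = false}]))
    = ((∫ ω, bi (A ω) ∂(μ[|{ω | T ω = true ∧ Z ω = true}]))
        - (∫ ω, bi (A ω) ∂(μ[|{ω | T ω = false ∧ Z ω = true}]))
        - (∫ ω, bi (A ω) ∂(μ[|{ω | T ω = true ∧ Z ω = false}]))
        + (∫ ω, bi (A ω) ∂(μ[|{ω | T ω = false ∧ Z ω = false}]))) * τ :=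
  stmt0_general μ T Z A Y Apot Ypot τ hmT hmZ hmApot hiYpot hconsA hconsY hrs hstab hie hnocm
end

section
/- Let D(X) = δ_{A,1}(X) − δ_{A,0}(X), r(X) = (δ_{Y,1}(X) − δ_{Y,0}(X))/D(X), and Ψ = E[r(X)]. Then the function φ(O) = r(X) − [(Z−π_Z(X))/(π_Z(X)(1−π_Z(X))D(X)²)]·{(Y₁−Y₀)D(X) − (A₁−A₀)(δ_{Y,1}(X)−δ_{Y,0}(X)) + δ_{Y,1}(X)δ_{A,0}(X) − δ_{Y,0}(X)δ_{A,1}(X)} satisfies E[φ(O)] = Ψ, i.e., the correction term has mean zero. -/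
open MeasureTheory ProbabilityTheory Filter

/-- If `f1, f2` are `m`-measurable, `u, v` are integrable with vanishing conditional
expectation given `m`, and the combination `f1*u + f2*v` is integrable, then it has
zero mean. -/
lemma aux_integral_zero {Ω : Type*} {m : MeasurableSpace Ω} [m0 : MeasurableSpace Ω]
    (hm : m ≤ m0) (μ : Measure Ω) [IsFiniteMeasure μ]
    (f1 f2 u v : Ω → ℝ)
    (hf1 : Measurable[m] f1) (hf2 : Measurable[m] f2)
    (hu : Integrable u μ) (hv : Integrable v μ)
    (hcu : μ[u|m] =ᵐ[μ] 0) (hcv : μ[v|m] =ᵐ[μ] 0)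
    (hint : Integrable (fun ω => f1 ω * u ω + f2 ω * v ω) μ) :
    ∫ ω, (f1 ω * u ω + f2 ω * v ω) ∂μ = 0 := by
  set S : ℕ → Set Ω := fun n => {ω | |f1 ω| ≤ (n : ℝ) ∧ |f2 ω| ≤ (n : ℝ)} with hSdef
  have hSeq : ∀ n, S n = f1 ⁻¹' (Set.Icc (-(n:ℝ)) n) ∩ f2 ⁻¹' (Set.Icc (-(n:ℝ)) n) := by
    intro n; ext ω
    simp only [hSdef, Set.mem_setOf_eq, Set.mem_inter_iff, Set.mem_preimage, Set.mem_Icc,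
      abs_le]
  have hSm : ∀ n, MeasurableSet[m] (S n) := fun n => by
    rw [hSeq n]
    exact (hf1 measurableSet_Icc).inter (hf2 measurableSet_Icc)
  have hSm0 : ∀ n, MeasurableSet[m0] (S n) := fun n => hm _ (hSm n)
  have hmono : Monotone S := by
    intro a b hab ω hω
    have h : (a : ℝ) ≤ (b : ℝ) := by exact_mod_cast hab
    exact ⟨hω.1.trans h, hω.2.trans h⟩
  have hunion : (⋃ n, S n) = Set.univ := by
    ext ω
    simp only [Set.mem_iUnion, Set.mem_univ, iff_true, hSdef, Set.mem_setOf_eq]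
    obtain ⟨n, hn⟩ := exists_nat_ge (max |f1 ω| |f2 ω|)
    exact ⟨n, (le_max_left _ _).trans hn, (le_max_right _ _).trans hn⟩
  have htend := tendsto_setIntegral_of_monotone hSm0 hmono
    (by rw [hunion]; exact hint.integrableOn)
  rw [hunion] at htend
  have hzero : ∀ n, ∫ ω in S n, (f1 ω * u ω + f2 ω * v ω) ∂μ = 0 := by
    intro n
    set ψ1 : Ω → ℝ := (S n).indicator f1 with hψ1def
    set ψ2 : Ω → ℝ := (S n).indicator f2 with hψ2def
    have hψ1m : StronglyMeasurable[m] ψ1 := (hf1.indicator (hSm n)).stronglyMeasurable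
    have hψ2m : StronglyMeasurable[m] ψ2 := (hf2.indicator (hSm n)).stronglyMeasurable
    have hψ1b : ∀ ω, ‖ψ1 ω‖ ≤ (n : ℝ) := by
      intro ω
      by_cases h : ω ∈ S n
      · rw [hψ1def, Set.indicator_of_mem h]; exact h.1
      · rw [hψ1def, Set.indicator_of_notMem h]; simp
    have hψ2b : ∀ ω, ‖ψ2 ω‖ ≤ (n : ℝ) := by
      intro ω
      by_cases h : ω ∈ S n
      · rw [hψ2def, Set.indicator_of_mem h]; exact h.2
      · rw [hψ2def, Set.indicator_of_notMem h]; simp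
    have hint1 : Integrable (fun ω => ψ1 ω * u ω) μ :=
      hu.bdd_mul (((hψ1m.mono hm).aestronglyMeasurable : AEStronglyMeasurable ψ1 μ)) (Eventually.of_forall hψ1b)
    have hint2 : Integrable (fun ω => ψ2 ω * v ω) μ :=
      hv.bdd_mul (((hψ2m.mono hm).aestronglyMeasurable : AEStronglyMeasurable ψ2 μ)) (Eventually.of_forall hψ2b)
    have hset : ∫ ω in S n, (f1 ω * u ω + f2 ω * v ω) ∂μ
        = ∫ ω, (ψ1 ω * u ω + ψ2 ω * v ω) ∂μ := by
      rw [← integral_indicator (hSm0 n)]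
      congr 1
      ext ω
      by_cases h : ω ∈ S n
      · simp [hψ1def, hψ2def, Set.indicator_of_mem h]
      · simp [hψ1def, hψ2def, Set.indicator_of_notMem h]
    have e1 : ∫ ω, ψ1 ω * u ω ∂μ = 0 := by
      have hmul := condExp_mul_of_stronglyMeasurable_left (μ := μ) hψ1m
        (by exact hint1) hu
      have h0 : μ[(ψ1 * u)|m] =ᵐ[μ] 0 := by
        refine hmul.trans ?_
        filter_upwards [hcu] with ω h
        simp [h]
      have : ∫ ω, (ψ1 * u) ω ∂μ = ∫ ω, (μ[(ψ1 * u)|m]) ω ∂μ :=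
        (integral_condExp (μ := μ) (f := ψ1 * u) hm).symm
      rw [show (fun ω => ψ1 ω * u ω) = ψ1 * u from rfl]
      rw [this, integral_congr_ae h0]
      simp
    have e2 : ∫ ω, ψ2 ω * v ω ∂μ = 0 := by
      have hmul := condExp_mul_of_stronglyMeasurable_left (μ := μ) hψ2m
        (by exact hint2) hv
      have h0 : μ[(ψ2 * v)|m] =ᵐ[μ] 0 := by
        refine hmul.trans ?_
        filter_upwards [hcv] with ω h
        simp [h]
      have : ∫ ω, (ψ2 * v) ω ∂μ = ∫ ω, (μ[(ψ2 * v)|m]) ω ∂μ :=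
        (integral_condExp (μ := μ) (f := ψ2 * v) hm).symm
      rw [show (fun ω => ψ2 ω * v ω) = ψ2 * v from rfl]
      rw [this, integral_congr_ae h0]
      simp
    rw [hset, integral_add hint1 hint2, e1, e2, add_zero]
  simp only [hzero] at htend
  have := tendsto_nhds_unique htend tendsto_const_nhds
  rwa [Measure.restrict_univ] at this

/-- the correction term of the panel-data efficient influence function has mean
zero, so `E[φ(O)] = Ψ = E[r(X)]`. Here `D(X) = δ_{A,1}(X) − δ_{A,0}(X)`,
`r(X) = (δ_{Y,1}(X) − δ_{Y,0}(X))/D(X)`, and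
`φ(O) = r(X) − [(Z−π_Z(X))/(π_Z(X)(1−π_Z(X))D(X)²)]·{(Y₁−Y₀)·D(X)
  − (A₁−A₀)·(δ_{Y,1}(X)−δ_{Y,0}(X)) + δ_{Y,1}(X)δ_{A,0}(X) − δ_{Y,0}(X)δ_{A,1}(X)}`. -/
theorem stmt12 {Ω 𝒳 : Type*} [MeasurableSpace Ω] [MeasurableSpace 𝒳]
    (μ : Measure Ω) [IsProbabilityMeasure μ]
    (X : Ω → 𝒳) (Z : Ω → Bool) (A₀ A₁ : Ω → Bool) (Y₀ Y₁ : Ω → ℝ)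
    (hmX : Measurable X) (hmZ : Measurable Z)
    (πZ δY1 δY0 δA1 δA0 : 𝒳 → ℝ)
    (hmπZ : Measurable πZ) (hmδY1 : Measurable δY1) (hmδY0 : Measurable δY0)
    (hmδA1 : Measurable δA1) (hmδA0 : Measurable δA0)
    (hπpos : ∀ x, 0 < πZ x ∧ πZ x < 1)
    (hD : ∀ x, δA1 x - δA0 x ≠ 0)
    -- π_Z(X) = Pr(Z=1 | X)
    (hπZ : μ[(fun ω => bi (Z ω)) | MeasurableSpace.comap X ‹MeasurableSpace 𝒳›]
        =ᵐ[μ] fun ω => πZ (X ω))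
    -- δ_{Y,z}(X) = E[Y₁ − Y₀ | X, Z = z]
    (hδY : μ[(fun ω => Y₁ ω - Y₀ ω)
          | MeasurableSpace.comap (fun ω => (X ω, Z ω)) inferInstance]
        =ᵐ[μ] fun ω => if Z ω then δY1 (X ω) else δY0 (X ω))
    -- δ_{A,z}(X) = E[A₁ − A₀ | X, Z = z]
    (hδA : μ[(fun ω => bi (A₁ ω) - bi (A₀ ω))
          | MeasurableSpace.comap (fun ω => (X ω, Z ω)) inferInstance]
        =ᵐ[μ] fun ω => if Z ω then δA1 (X ω) else δA0 (X ω))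
    (hiY : Integrable (fun ω => Y₁ ω - Y₀ ω) μ)
    (hir : Integrable (fun ω => (δY1 (X ω) - δY0 (X ω)) / (δA1 (X ω) - δA0 (X ω))) μ)
    (hiφ : Integrable (fun ω =>
        (δY1 (X ω) - δY0 (X ω)) / (δA1 (X ω) - δA0 (X ω))
        - (bi (Z ω) - πZ (X ω)) / (πZ (X ω) * (1 - πZ (X ω)) * (δA1 (X ω) - δA0 (X ω)) ^ 2)
          * ((Y₁ ω - Y₀ ω) * (δA1 (X ω) - δA0 (X ω))
            - (bi (A₁ ω) - bi (A₀ ω)) * (δY1 (X ω) - δY0 (X ω))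
            + δY1 (X ω) * δA0 (X ω) - δY0 (X ω) * δA1 (X ω))) μ) :
    ∫ ω, ((δY1 (X ω) - δY0 (X ω)) / (δA1 (X ω) - δA0 (X ω))
        - (bi (Z ω) - πZ (X ω)) / (πZ (X ω) * (1 - πZ (X ω)) * (δA1 (X ω) - δA0 (X ω)) ^ 2)
          * ((Y₁ ω - Y₀ ω) * (δA1 (X ω) - δA0 (X ω))
            - (bi (A₁ ω) - bi (A₀ ω)) * (δY1 (X ω) - δY0 (X ω))
            + δY1 (X ω) * δA0 (X ω) - δY0 (X ω) * δA1 (X ω))) ∂μ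
      = ∫ ω, (δY1 (X ω) - δY0 (X ω)) / (δA1 (X ω) - δA0 (X ω)) ∂μ := by
  classical
  have hbi : Measurable bi := Measurable.of_discrete
  have hmXZ : Measurable (fun ω => (X ω, Z ω)) := hmX.prodMk hmZ
  have hmle : MeasurableSpace.comap (fun ω => (X ω, Z ω))
      (inferInstance : MeasurableSpace (𝒳 × Bool)) ≤ ‹MeasurableSpace Ω› := hmXZ.comap_le
  have hmXle : MeasurableSpace.comap X ‹MeasurableSpace 𝒳› ≤ ‹MeasurableSpace Ω› :=
    hmX.comap_le
  have hp : Measurable[MeasurableSpace.comap (fun ω => (X ω, Z ω))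
      (inferInstance : MeasurableSpace (𝒳 × Bool))] (fun ω => (X ω, Z ω)) :=
    Measurable.of_comap_le le_rfl
  -- integrabilities coming from the conditional-expectation identities
  have hidY : Integrable (fun ω => if Z ω then δY1 (X ω) else δY0 (X ω)) μ :=
    integrable_condExp.congr hδY
  have hidA : Integrable (fun ω => if Z ω then δA1 (X ω) else δA0 (X ω)) μ :=
    integrable_condExp.congr hδA
  have hπint : Integrable (fun ω => πZ (X ω)) μ := integrable_condExp.congr hπZ
  have hbiZint : Integrable (fun ω => bi (Z ω)) μ := by
    refine Integrable.mono' (integrable_const (1:ℝ)) ((hbi.comp hmZ).aestronglyMeasurable) ?_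
    refine Eventually.of_forall fun ω => ?_
    simp only [bi, Real.norm_eq_abs]
    split <;> norm_num
  by_cases hAint : Integrable (fun ω => bi (A₁ ω) - bi (A₀ ω)) μ
  · -- main case: A-difference is integrable
    -- the two multipliers, measurable w.r.t. the comap σ-algebra
    have hG : Measurable (fun q : 𝒳 × Bool => (bi q.2 - πZ q.1) /
        (πZ q.1 * (1 - πZ q.1) * (δA1 q.1 - δA0 q.1) ^ 2)) := by
      refine Measurable.div ?_ ?_
      · exact (hbi.comp measurable_snd).sub (hmπZ.comp measurable_fst)
      · exact ((hmπZ.comp measurable_fst).mul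
          (measurable_const.sub (hmπZ.comp measurable_fst))).mul
          (((hmδA1.comp measurable_fst).sub (hmδA0.comp measurable_fst)).pow_const 2)
    have hf1 : Measurable[MeasurableSpace.comap (fun ω => (X ω, Z ω))
        (inferInstance : MeasurableSpace (𝒳 × Bool))]
        (fun ω => (bi (Z ω) - πZ (X ω)) /
          (πZ (X ω) * (1 - πZ (X ω)) * (δA1 (X ω) - δA0 (X ω)) ^ 2)
          * (δA1 (X ω) - δA0 (X ω))) :=
      (hG.mul ((hmδA1.comp measurable_fst).sub (hmδA0.comp measurable_fst))).comp hp
    have hf2 : Measurable[MeasurableSpace.comap (fun ω => (X ω, Z ω))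
        (inferInstance : MeasurableSpace (𝒳 × Bool))]
        (fun ω => -((bi (Z ω) - πZ (X ω)) /
          (πZ (X ω) * (1 - πZ (X ω)) * (δA1 (X ω) - δA0 (X ω)) ^ 2)
          * (δY1 (X ω) - δY0 (X ω)))) :=
      ((hG.mul ((hmδY1.comp measurable_fst).sub (hmδY0.comp measurable_fst))).neg).comp hp
    -- strong measurability of the conditional means
    have hdYsm : StronglyMeasurable[MeasurableSpace.comap (fun ω => (X ω, Z ω))
        (inferInstance : MeasurableSpace (𝒳 × Bool))]
        (fun ω => if Z ω then δY1 (X ω) else δY0 (X ω)) := by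
      have hF : Measurable (fun q : 𝒳 × Bool => if q.2 then δY1 q.1 else δY0 q.1) := by
        refine Measurable.ite ?_ (hmδY1.comp measurable_fst) (hmδY0.comp measurable_fst)
        exact measurable_snd (measurableSet_singleton true)
      exact (hF.comp hp).stronglyMeasurable
    have hdAsm : StronglyMeasurable[MeasurableSpace.comap (fun ω => (X ω, Z ω))
        (inferInstance : MeasurableSpace (𝒳 × Bool))]
        (fun ω => if Z ω then δA1 (X ω) else δA0 (X ω)) := by
      have hF : Measurable (fun q : 𝒳 × Bool => if q.2 then δA1 q.1 else δA0 q.1) := by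
        refine Measurable.ite ?_ (hmδA1.comp measurable_fst) (hmδA0.comp measurable_fst)
        exact measurable_snd (measurableSet_singleton true)
      exact (hF.comp hp).stronglyMeasurable
    -- centered variables with vanishing conditional expectation
    have hu : Integrable (fun ω => (Y₁ ω - Y₀ ω)
        - (if Z ω then δY1 (X ω) else δY0 (X ω))) μ := hiY.sub hidY
    have hv : Integrable (fun ω => (bi (A₁ ω) - bi (A₀ ω))
        - (if Z ω then δA1 (X ω) else δA0 (X ω))) μ := hAint.sub hidA
    have hcu : μ[(fun ω => (Y₁ ω - Y₀ ω) - (if Z ω then δY1 (X ω) else δY0 (X ω)))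
        | MeasurableSpace.comap (fun ω => (X ω, Z ω)) inferInstance] =ᵐ[μ] 0 := by
      have h1 : μ[(fun ω => (Y₁ ω - Y₀ ω) - (if Z ω then δY1 (X ω) else δY0 (X ω)))
          | MeasurableSpace.comap (fun ω => (X ω, Z ω)) inferInstance] =ᵐ[μ]
          μ[(fun ω => Y₁ ω - Y₀ ω)
            | MeasurableSpace.comap (fun ω => (X ω, Z ω)) inferInstance]
          - μ[(fun ω => if Z ω then δY1 (X ω) else δY0 (X ω))
            | MeasurableSpace.comap (fun ω => (X ω, Z ω)) inferInstance] :=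
        condExp_sub (m := MeasurableSpace.comap (fun ω => (X ω, Z ω)) inferInstance)
          (μ := μ) hiY hidY
      have h2 := condExp_of_stronglyMeasurable hmle hdYsm hidY
      filter_upwards [h1, hδY] with ω e1 e3
      rw [e1, Pi.sub_apply, h2, e3]
      simp
    have hcv : μ[(fun ω => (bi (A₁ ω) - bi (A₀ ω))
        - (if Z ω then δA1 (X ω) else δA0 (X ω)))
        | MeasurableSpace.comap (fun ω => (X ω, Z ω)) inferInstance] =ᵐ[μ] 0 := by
      have h1 : μ[(fun ω => (bi (A₁ ω) - bi (A₀ ω)) - (if Z ω then δA1 (X ω) else δA0 (X ω)))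
          | MeasurableSpace.comap (fun ω => (X ω, Z ω)) inferInstance] =ᵐ[μ]
          μ[(fun ω => bi (A₁ ω) - bi (A₀ ω))
            | MeasurableSpace.comap (fun ω => (X ω, Z ω)) inferInstance]
          - μ[(fun ω => if Z ω then δA1 (X ω) else δA0 (X ω))
            | MeasurableSpace.comap (fun ω => (X ω, Z ω)) inferInstance] :=
        condExp_sub (m := MeasurableSpace.comap (fun ω => (X ω, Z ω)) inferInstance)
          (μ := μ) hAint hidA
      have h2 := condExp_of_stronglyMeasurable hmle hdAsm hidA
      filter_upwards [h1, hδA] with ω e1 e3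
      rw [e1, Pi.sub_apply, h2, e3]
      simp
    -- the pointwise algebraic identity
    have hpt : ∀ ω, (δY1 (X ω) - δY0 (X ω)) / (δA1 (X ω) - δA0 (X ω))
        - ((δY1 (X ω) - δY0 (X ω)) / (δA1 (X ω) - δA0 (X ω))
          - (bi (Z ω) - πZ (X ω)) / (πZ (X ω) * (1 - πZ (X ω)) * (δA1 (X ω) - δA0 (X ω)) ^ 2)
            * ((Y₁ ω - Y₀ ω) * (δA1 (X ω) - δA0 (X ω))
              - (bi (A₁ ω) - bi (A₀ ω)) * (δY1 (X ω) - δY0 (X ω))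
              + δY1 (X ω) * δA0 (X ω) - δY0 (X ω) * δA1 (X ω)))
        = ((bi (Z ω) - πZ (X ω)) /
            (πZ (X ω) * (1 - πZ (X ω)) * (δA1 (X ω) - δA0 (X ω)) ^ 2)
            * (δA1 (X ω) - δA0 (X ω)))
          * ((Y₁ ω - Y₀ ω) - (if Z ω then δY1 (X ω) else δY0 (X ω)))
        + (-((bi (Z ω) - πZ (X ω)) /
            (πZ (X ω) * (1 - πZ (X ω)) * (δA1 (X ω) - δA0 (X ω)) ^ 2)
            * (δY1 (X ω) - δY0 (X ω))))
          * ((bi (A₁ ω) - bi (A₀ ω)) - (if Z ω then δA1 (X ω) else δA0 (X ω))) := by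
      intro ω
      cases hZ : Z ω <;> simp only [hZ, if_true, if_false, Bool.false_eq_true] <;> ring
    have hcorr : Integrable (fun ω =>
        ((bi (Z ω) - πZ (X ω)) / (πZ (X ω) * (1 - πZ (X ω)) * (δA1 (X ω) - δA0 (X ω)) ^ 2)
          * (δA1 (X ω) - δA0 (X ω)))
          * ((Y₁ ω - Y₀ ω) - (if Z ω then δY1 (X ω) else δY0 (X ω)))
        + (-((bi (Z ω) - πZ (X ω)) /
            (πZ (X ω) * (1 - πZ (X ω)) * (δA1 (X ω) - δA0 (X ω)) ^ 2)
            * (δY1 (X ω) - δY0 (X ω))))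
          * ((bi (A₁ ω) - bi (A₀ ω)) - (if Z ω then δA1 (X ω) else δA0 (X ω)))) μ :=
      (hir.sub hiφ).congr (Eventually.of_forall hpt)
    have key := aux_integral_zero hmle μ _ _ _ _ hf1 hf2 hu hv hcu hcv hcorr
    have hrw : ∫ ω, ((δY1 (X ω) - δY0 (X ω)) / (δA1 (X ω) - δA0 (X ω))
        - (bi (Z ω) - πZ (X ω)) / (πZ (X ω) * (1 - πZ (X ω)) * (δA1 (X ω) - δA0 (X ω)) ^ 2)
          * ((Y₁ ω - Y₀ ω) * (δA1 (X ω) - δA0 (X ω))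
            - (bi (A₁ ω) - bi (A₀ ω)) * (δY1 (X ω) - δY0 (X ω))
            + δY1 (X ω) * δA0 (X ω) - δY0 (X ω) * δA1 (X ω))) ∂μ
        = ∫ ω, ((δY1 (X ω) - δY0 (X ω)) / (δA1 (X ω) - δA0 (X ω))
          - (((bi (Z ω) - πZ (X ω)) /
              (πZ (X ω) * (1 - πZ (X ω)) * (δA1 (X ω) - δA0 (X ω)) ^ 2)
              * (δA1 (X ω) - δA0 (X ω)))
            * ((Y₁ ω - Y₀ ω) - (if Z ω then δY1 (X ω) else δY0 (X ω)))
          + (-((bi (Z ω) - πZ (X ω)) /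
              (πZ (X ω) * (1 - πZ (X ω)) * (δA1 (X ω) - δA0 (X ω)) ^ 2)
              * (δY1 (X ω) - δY0 (X ω))))
            * ((bi (A₁ ω) - bi (A₀ ω)) - (if Z ω then δA1 (X ω) else δA0 (X ω))))) ∂μ := by
      refine integral_congr_ae (Eventually.of_forall fun ω => ?_)
      have h := hpt ω
      linarith
    rw [hrw, integral_sub hir hcorr, key, sub_zero]
  · -- degenerate case: contradiction with `hD`
    exfalso
    have hcond0 : μ[(fun ω => bi (A₁ ω) - bi (A₀ ω))
        | MeasurableSpace.comap (fun ω => (X ω, Z ω)) inferInstance] = 0 :=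
      condExp_of_not_integrable hAint
    have h0 : (fun ω => if Z ω then δA1 (X ω) else δA0 (X ω)) =ᵐ[μ] (0 : Ω → ℝ) := by
      rw [hcond0] at hδA
      exact hδA.symm
    -- first: δA1 ∘ X = 0 a.e.
    have hs1m : MeasurableSet[MeasurableSpace.comap X ‹MeasurableSpace 𝒳›]
        {ω | δA1 (X ω) ≠ 0} :=
      ⟨{x | δA1 x ≠ 0}, (hmδA1 (measurableSet_singleton 0)).compl, rfl⟩
    have hs1m0 : MeasurableSet {ω | δA1 (X ω) ≠ 0} := hmXle _ hs1m
    have hZ1 : ∀ᵐ ω ∂μ, ω ∈ {ω | δA1 (X ω) ≠ 0} → bi (Z ω) = 0 := by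
      filter_upwards [h0] with ω hω hmem
      by_cases hZω : Z ω = true
      · exact absurd (by simpa [hZω] using hω) hmem
      · simp only [Bool.not_eq_true] at hZω
        simp [bi, hZω]
    have hzero1 : ∫ ω in {ω | δA1 (X ω) ≠ 0}, πZ (X ω) ∂μ = 0 := by
      have e1 : ∫ ω in {ω | δA1 (X ω) ≠ 0}, πZ (X ω) ∂μ
          = ∫ ω in {ω | δA1 (X ω) ≠ 0},
            (μ[(fun ω => bi (Z ω)) | MeasurableSpace.comap X ‹MeasurableSpace 𝒳›]) ω ∂μ :=
        setIntegral_congr_ae hs1m0 (hπZ.mono fun ω h _ => h.symm)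
      rw [e1, setIntegral_condExp hmXle hbiZint hs1m]
      rw [setIntegral_congr_ae hs1m0 hZ1]
      simp
    have hae1 : ∀ᵐ ω ∂μ, δA1 (X ω) = 0 := by
      have hnn : 0 ≤ᵐ[μ.restrict {ω | δA1 (X ω) ≠ 0}] (fun ω => πZ (X ω)) :=
        Eventually.of_forall fun ω => (hπpos (X ω)).1.le
      have hi : Integrable (fun ω => πZ (X ω)) (μ.restrict {ω | δA1 (X ω) ≠ 0}) :=
        hπint.restrict
      have h := (integral_eq_zero_iff_of_nonneg_ae hnn hi).mp hzero1
      have h2 := (ae_restrict_iff' hs1m0).mp h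
      filter_upwards [h2] with ω hω
      by_contra hne
      exact absurd (hω hne) (ne_of_gt (hπpos (X ω)).1)
    -- second: δA0 ∘ X = 0 a.e.
    have hs0m : MeasurableSet[MeasurableSpace.comap X ‹MeasurableSpace 𝒳›]
        {ω | δA0 (X ω) ≠ 0} :=
      ⟨{x | δA0 x ≠ 0}, (hmδA0 (measurableSet_singleton 0)).compl, rfl⟩
    have hs0m0 : MeasurableSet {ω | δA0 (X ω) ≠ 0} := hmXle _ hs0m
    have hZ0 : ∀ᵐ ω ∂μ, ω ∈ {ω | δA0 (X ω) ≠ 0} → 1 - bi (Z ω) = 0 := by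
      filter_upwards [h0] with ω hω hmem
      by_cases hZω : Z ω = true
      · simp [bi, hZω]
      · simp only [Bool.not_eq_true] at hZω
        rw [hZω] at hω
        exact absurd (by simpa using hω) hmem
    have hbiZ1int : Integrable (fun ω => 1 - bi (Z ω)) μ := (integrable_const 1).sub hbiZint
    have hcond1 : μ[(fun ω => 1 - bi (Z ω)) | MeasurableSpace.comap X ‹MeasurableSpace 𝒳›]
        =ᵐ[μ] (fun ω => 1 - πZ (X ω)) := by
      have h1 := condExp_sub (m := MeasurableSpace.comap X ‹MeasurableSpace 𝒳›) (μ := μ)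
        (integrable_const (1:ℝ)) hbiZint
      have h2 : μ[(fun _ : Ω => (1:ℝ)) | MeasurableSpace.comap X ‹MeasurableSpace 𝒳›]
          = fun _ => (1:ℝ) := condExp_const hmXle 1
      filter_upwards [h1, hπZ] with ω e1 e3
      rw [show (fun ω => 1 - bi (Z ω)) = (fun _ : Ω => (1:ℝ)) - (fun ω => bi (Z ω)) from rfl,
        e1, Pi.sub_apply, h2, e3]
    have hzero0 : ∫ ω in {ω | δA0 (X ω) ≠ 0}, (1 - πZ (X ω)) ∂μ = 0 := by
      have e1 : ∫ ω in {ω | δA0 (X ω) ≠ 0}, (1 - πZ (X ω)) ∂μ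
          = ∫ ω in {ω | δA0 (X ω) ≠ 0},
            (μ[(fun ω => 1 - bi (Z ω)) | MeasurableSpace.comap X ‹MeasurableSpace 𝒳›]) ω ∂μ :=
        setIntegral_congr_ae hs0m0 (hcond1.mono fun ω h _ => h.symm)
      rw [e1, setIntegral_condExp hmXle hbiZ1int hs0m]
      rw [setIntegral_congr_ae hs0m0 hZ0]
      simp
    have hae0 : ∀ᵐ ω ∂μ, δA0 (X ω) = 0 := by
      have hnn : 0 ≤ᵐ[μ.restrict {ω | δA0 (X ω) ≠ 0}] (fun ω => 1 - πZ (X ω)) :=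
        Eventually.of_forall fun ω => by
          have := (hπpos (X ω)).2; simp; linarith
      have hi : Integrable (fun ω => 1 - πZ (X ω)) (μ.restrict {ω | δA0 (X ω) ≠ 0}) :=
        ((integrable_const 1).sub hπint).restrict
      have h := (integral_eq_zero_iff_of_nonneg_ae hnn hi).mp hzero0
      have h2 := (ae_restrict_iff' hs0m0).mp h
      filter_upwards [h2] with ω hω
      by_contra hne
      have := hω hne
      have := (hπpos (X ω)).2
      simp only [Pi.zero_apply] at *
      linarith
    have hfalse : ∀ᵐ ω ∂μ, False := by
      filter_upwards [hae1, hae0] with ω h1 h2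
      exact hD (X ω) (by rw [h1, h2, sub_zero])
    have hne : (MeasureTheory.ae μ).NeBot := IsProbabilityMeasure.ae_neBot
    obtain ⟨ω, hω⟩ := hfalse.exists
    exact hω
end
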